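/- Let V be a finite-dimensional complex vector space of dimension at least 3, and let q be a nondegenerate quadratic form on V. Then the special orthogonal group of q acts transitively on nonzero isotropic vectors: for any nonzero vectors v, w ∈ V with q(v) = 0 and q(w) = 0, there exists a linear automorphism g of V preserving q (i.e. q(g x) = q(x) for all x ∈ V) with determinant 1 such that g v = w. -/

import Mathlib

/-!
Over any field, the reflection `y ↦ y - (polar Q u y / Q u) • u` in an anisotropic vector `u` is
an isometry of determinant `-1`. If `v, w` are isotropic with `polar Q v w ≠ 0`, then `v - w` is
anisotropic and its reflection sends `v` to `w`; composing with the reflection in an anisotropic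
vector orthogonal to `w` gives an element of `SO(Q)`. Such a vector exists once `dim V ≥ 3`:
otherwise `w⊥` would be totally isotropic, forcing `V` to be the hyperbolic plane spanned by `w`
and a partner `b`. If `polar Q v w = 0`, one passes through an isotropic `z` pairing nontrivially
with both.
-/

open QuadraticMap Module

theorem LinearMap.det_id_sub_smulRight {R M : Type*} [CommRing R] [AddCommGroup M] [Module R M]
    [Module.Free R M] [Module.Finite R M] (f : M →ₗ[R] R) (x : M) :
    LinearMap.det (LinearMap.id - f.smulRight x) = 1 - f x := by
  let b := Module.Free.chooseBasis R M
  rw [← LinearMap.det_toMatrix b, map_sub, LinearMap.toMatrix_id, LinearMap.toMatrix_smulRight,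
    Matrix.vecMulVec_eq Unit, Matrix.det_one_sub_mul_comm, Matrix.det_unique]
  simp only [Matrix.replicateRow_mul_replicateCol_apply, Matrix.one_apply_eq, Matrix.sub_apply]
  conv_rhs => rw [← b.sum_repr x, map_sum]
  simp only [dotProduct, Function.comp_apply, map_smul, smul_eq_mul, mul_comm]

theorem Submodule.span_pair_ne_top {K V : Type*} [Field K] [AddCommGroup V] [Module K V]
    [FiniteDimensional K V] (hdim : 2 < finrank K V) (x y : V) : span K {x, y} ≠ ⊤ := by
  classical
  intro h
  have := (finrank_span_finset_le_card (R := K) ({x, y} : Finset V)).trans Finset.card_le_two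
  rw [Finset.coe_pair, Set.finrank, h, finrank_top] at this
  omega

namespace QuadraticMap

section CommRing

variable {R M : Type*} [CommRing R] [AddCommGroup M] [Module R M] (Q : QuadraticMap R M R)

theorem map_sub_eq_sub_polar (x y : M) : Q (x - y) = Q x + Q y - polar Q x y := by
  rw [sub_eq_add_neg, QuadraticMap.map_add (⇑Q), QuadraticMap.map_neg, polar_neg_right,
    ← sub_eq_add_neg]

theorem polar_self_eq_two_mul (x : M) : polar Q x x = 2 * Q x := by
  rw [polar_self, two_smul, two_mul]

theorem polar_eq_zero_of_isotropic {x y : M} (hx : Q x = 0) (hy : Q y = 0) (hxy : Q (x + y) = 0) :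
    polar Q x y = 0 := by
  simp [polar, hx, hy, hxy]

def specialOrthogonalGroup : Subgroup (M ≃ₗ[R] M) where
  carrier := {g | (∀ x, Q (g x) = Q x) ∧ LinearMap.det (g : M →ₗ[R] M) = 1}
  one_mem' := ⟨fun _ ↦ rfl, LinearMap.det_id⟩
  mul_mem' {g h} hg hh := ⟨fun x ↦ (hg.1 _).trans (hh.1 x), by
    rw [LinearEquiv.coe_toLinearMap_mul, map_mul, hg.2, hh.2, one_mul]⟩
  inv_mem' {g} hg := ⟨fun x ↦ by simpa using (hg.1 (g.symm x)).symm,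
    show LinearMap.det (g.symm : M →ₗ[R] M) = 1 by simpa [hg.2] using g.det_mul_det_symm⟩

theorem mem_specialOrthogonalGroup {g : M ≃ₗ[R] M} :
    g ∈ Q.specialOrthogonalGroup ↔ (∀ x, Q (g x) = Q x) ∧ LinearMap.det (g : M →ₗ[R] M) = 1 :=
  Iff.rfl

end CommRing

section Field

variable {K V : Type*} [Field K] [AddCommGroup V] [Module K V] (Q : QuadraticMap K V K)

theorem inv_smul_polarBilin_apply_self {u : V} (hu : Q u ≠ 0) :
    ((Q u)⁻¹ • polarBilin Q u) u = 2 := by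
  rw [LinearMap.smul_apply, polarBilin_apply_apply, polar_self_eq_two_mul, smul_eq_mul]
  field_simp

def reflection {u : V} (hu : Q u ≠ 0) : V ≃ₗ[K] V :=
  Module.reflection (inv_smul_polarBilin_apply_self Q hu)

variable {Q}

theorem reflection_apply {u : V} (hu : Q u ≠ 0) (y : V) :
    Q.reflection hu y = y - ((Q u)⁻¹ * polar Q u y) • u := by
  simp [reflection, Module.reflection_apply]

theorem map_reflection {u : V} (hu : Q u ≠ 0) (y : V) : Q (Q.reflection hu y) = Q y := by
  rw [reflection_apply, map_sub_eq_sub_polar, QuadraticMap.map_smul, polar_smul_right,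
    polar_comm Q y u, smul_eq_mul, smul_eq_mul]
  field_simp
  ring

theorem det_reflection [FiniteDimensional K V] {u : V} (hu : Q u ≠ 0) :
    LinearMap.det (Q.reflection hu : V →ₗ[K] V) = -1 := by
  rw [show (Q.reflection hu : V →ₗ[K] V) = LinearMap.id - ((Q u)⁻¹ • polarBilin Q u).smulRight u
    from rfl, LinearMap.det_id_sub_smulRight, inv_smul_polarBilin_apply_self Q hu]
  norm_num

theorem reflection_apply_of_polar_eq_zero {u y : V} (hu : Q u ≠ 0) (h : polar Q u y = 0) :
    Q.reflection hu y = y := by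
  simp [reflection_apply, h]

theorem reflection_sub_apply_left {x y : V} (hxy : Q x = Q y) (h : Q (x - y) ≠ 0) :
    Q.reflection h x = y := by
  have : polar Q (x - y) x = Q (x - y) := by
    rw [polar_sub_left, polar_self_eq_two_mul, map_sub_eq_sub_polar, hxy, polar_comm Q y x]
    ring
  rw [reflection_apply, this, inv_mul_cancel₀ h, one_smul, sub_sub_cancel]

theorem reflection_mul_reflection_mem_specialOrthogonalGroup [FiniteDimensional K V] {u u' : V}
    (hu : Q u ≠ 0) (hu' : Q u' ≠ 0) :
    Q.reflection hu * Q.reflection hu' ∈ Q.specialOrthogonalGroup := by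
  refine (mem_specialOrthogonalGroup Q).2 ⟨fun x ↦ by simp only [LinearEquiv.mul_apply,
    map_reflection], ?_⟩
  rw [LinearEquiv.coe_toLinearMap_mul, map_mul, det_reflection, det_reflection]
  norm_num

theorem exists_isotropic_polar_eq_one (hQ : ∀ x : V, (∀ y : V, polar Q x y = 0) → x = 0)
    {v : V} (hv : v ≠ 0) (hQv : Q v = 0) : ∃ a : V, Q a = 0 ∧ polar Q v a = 1 := by
  obtain ⟨a₀, ha₀⟩ : ∃ a₀, polar Q v a₀ ≠ 0 := by
    by_contra! h
    exact hv (hQ v h)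
  obtain ⟨a, ha⟩ : ∃ a, polar Q v a = 1 :=
    ⟨(polar Q v a₀)⁻¹ • a₀, by rw [polar_smul_right, smul_eq_mul, inv_mul_cancel₀ ha₀]⟩
  refine ⟨a - Q a • v, ?_, ?_⟩
  · rw [map_sub_eq_sub_polar, QuadraticMap.map_smul, polar_smul_right, polar_comm Q a v, ha, hQv]
    simp
  · rw [polar_sub_right, polar_smul_right, ha, polar_self_eq_two_mul, hQv]
    simp

theorem mem_span_pair_of_orthogonal_isotropic
    (hQ : ∀ x : V, (∀ y : V, polar Q x y = 0) → x = 0) {w b : V} (hwb : polar Q w b = 1)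
    (hiso : ∀ c, polar Q w c = 0 → Q c = 0) (x : V) : x ∈ Submodule.span K {w, b} := by
  have horth : ∀ c d, polar Q w c = 0 → polar Q w d = 0 → polar Q c d = 0 := fun c d hc hd ↦
    polar_eq_zero_of_isotropic Q (hiso c hc) (hiso d hd)
      (hiso _ (by rw [polar_add_right, hc, hd, add_zero]))
  have hproj : ∀ y, polar Q w (y - polar Q y w • b) = 0 := fun y ↦ by
    rw [polar_sub_right, polar_smul_right, hwb, polar_comm Q w y, smul_eq_mul, mul_one, sub_self]
  have hrad : ∀ c, polar Q w c = 0 → c - polar Q c b • w = 0 := fun c hc ↦ hQ _ fun y ↦ by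
    rw [← sub_add_cancel y (polar Q y w • b)]
    simp only [polar_add_right, polar_smul_right, polar_sub_left, polar_smul_left,
      horth c _ hc (hproj y), hproj y, hwb, smul_eq_mul]
    ring
  have hx := hrad _ (hproj x)
  rw [Submodule.mem_span_pair]
  exact ⟨_, _, by linear_combination (norm := module) -hx⟩

theorem exists_anisotropic_polar_eq_zero [FiniteDimensional K V] (hdim : 2 < finrank K V)
    (hQ : ∀ x : V, (∀ y : V, polar Q x y = 0) → x = 0) {w : V} (hw : w ≠ 0) (hQw : Q w = 0) :
    ∃ c : V, polar Q w c = 0 ∧ Q c ≠ 0 := by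
  by_contra! hiso
  obtain ⟨b, -, hwb⟩ := exists_isotropic_polar_eq_one hQ hw hQw
  exact Submodule.span_pair_ne_top hdim w b <| Submodule.eq_top_iff'.mpr <|
    mem_span_pair_of_orthogonal_isotropic hQ hwb hiso

theorem exists_mem_specialOrthogonalGroup_apply_eq_of_polar_ne_zero [FiniteDimensional K V]
    (hdim : 2 < finrank K V) (hQ : ∀ x : V, (∀ y : V, polar Q x y = 0) → x = 0) {v w : V}
    (hw : w ≠ 0) (hQv : Q v = 0) (hQw : Q w = 0) (hvw : polar Q v w ≠ 0) :
    ∃ g ∈ Q.specialOrthogonalGroup, g v = w := by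
  have hu : Q (v - w) ≠ 0 := by
    simpa [map_sub_eq_sub_polar, hQv, hQw] using hvw
  obtain ⟨c, hwc, hc⟩ := exists_anisotropic_polar_eq_zero hdim hQ hw hQw
  refine ⟨Q.reflection hc * Q.reflection hu,
    reflection_mul_reflection_mem_specialOrthogonalGroup hc hu, ?_⟩
  rw [LinearEquiv.mul_apply, reflection_sub_apply_left (hQv.trans hQw.symm),
    reflection_apply_of_polar_eq_zero hc (by rwa [polar_comm])]

theorem exists_isotropic_polar_ne_zero_of_polar_eq_zero
    (hQ : ∀ x : V, (∀ y : V, polar Q x y = 0) → x = 0) {v w : V} (hv : v ≠ 0) (hw : w ≠ 0)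
    (hQv : Q v = 0) (hQw : Q w = 0) (hvw : polar Q v w = 0) :
    ∃ z : V, Q z = 0 ∧ polar Q v z ≠ 0 ∧ polar Q w z ≠ 0 := by
  obtain ⟨a, hQa, hva⟩ := exists_isotropic_polar_eq_one hQ hv hQv
  obtain ⟨b, hQb, hwb⟩ := exists_isotropic_polar_eq_one hQ hw hQw
  rcases ne_or_eq (polar Q w a) 0 with hwa | hwa
  · exact ⟨a, hQa, by simp [hva], hwa⟩
  rcases ne_or_eq (polar Q v b) 0 with hvb | hvb
  · exact ⟨b, hQb, hvb, by simp [hwb]⟩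
  refine ⟨a + b - polar Q a b • w, ?_, ?_, ?_⟩
  · rw [map_sub_eq_sub_polar, QuadraticMap.map_add (⇑Q), QuadraticMap.map_smul, polar_smul_right,
      polar_add_left, polar_comm Q a w, polar_comm Q b w, hwa, hwb, hQa, hQb, hQw]
    simp
  · simp [polar_add_right, polar_sub_right, polar_smul_right, hva, hvb, hvw]
  · simp [polar_add_right, polar_sub_right, polar_smul_right, hwa, hwb, hQw]

end Field

end QuadraticMap

/-- The special orthogonal group of a nondegenerate quadratic form `q` on a finite-dimensional
complex vector space of dimension at least `3` acts transitively on nonzero isotropic vectors. -/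
theorem so_transitive_on_isotropic_vectors {V : Type*} [AddCommGroup V] [Module ℂ V]
    [FiniteDimensional ℂ V] (hdim : 3 ≤ Module.finrank ℂ V)
    (q : QuadraticForm ℂ V)
    (hq : ∀ x : V, (∀ y : V, QuadraticMap.polar (⇑q) x y = 0) → x = 0)
    (v w : V) (hv : v ≠ 0) (hw : w ≠ 0) (hqv : q v = 0) (hqw : q w = 0) :
    ∃ g : V ≃ₗ[ℂ] V, (∀ x : V, q (g x) = q x) ∧
      LinearMap.det (g : V →ₗ[ℂ] V) = 1 ∧ g v = w := by
  suffices ∃ g ∈ q.specialOrthogonalGroup, g v = w by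
    obtain ⟨g, hg, hgv⟩ := this
    obtain ⟨hgq, hgdet⟩ := (mem_specialOrthogonalGroup q).1 hg
    exact ⟨g, hgq, hgdet, hgv⟩
  rcases ne_or_eq (polar q v w) 0 with hvw | hvw
  · exact exists_mem_specialOrthogonalGroup_apply_eq_of_polar_ne_zero hdim hq hw hqv hqw hvw
  obtain ⟨z, hqz, hvz, hwz⟩ := exists_isotropic_polar_ne_zero_of_polar_eq_zero hq hv hw hqv hqw hvw
  have hz : z ≠ 0 := by
    rintro rfl
    exact hvz (polar_zero_right q v)
  obtain ⟨g₁, hg₁, hg₁v⟩ :=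
    exists_mem_specialOrthogonalGroup_apply_eq_of_polar_ne_zero hdim hq hz hqv hqz hvz
  obtain ⟨g₂, hg₂, hg₂z⟩ := exists_mem_specialOrthogonalGroup_apply_eq_of_polar_ne_zero hdim hq hw
    hqz hqw (by rwa [polar_comm])
  exact ⟨g₂ * g₁, mul_mem hg₂ hg₁, by rw [LinearEquiv.mul_apply, hg₁v, hg₂z]⟩
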